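/- arXiv:2211.11196 — 2 statements merged into one kernel-verified Lean document; each statement's English description precedes it below -/
import Mathlib

section
/- For 0 < α < 1, λ ∈ ℝ, and σ > 0, the derivative of σ ↦ E_α(λ σ^α) equals λ σ^{α−1} E_{α,α}(λ σ^α). -/
noncomputable def mittagLeffler (α : ℝ) (z : ℂ) : ℂ :=
  ∑' n : ℕ, z ^ n / Complex.Gamma (α * n + 1)

/-- The two-parameter (generalized) Mittag-Leffler function. -/
noncomputable def mittagLeffler2 (α β : ℝ) (z : ℂ) : ℂ :=
  ∑' n : ℕ, z ^ n / Complex.Gamma (α * n + β)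

/-!
The ratio `Γ(x) / Γ(x + α)` tends to `0` (by log-convexity of `Γ` when `α < 1`, by monotonicity
of `Γ` on `[2, ∞)` when `α ≥ 1`), so the ratio test makes `E_α` an entire function. Since
`n / Γ(αn + 1) = 1 / (α Γ(αn + α))`, differentiating term by term, which is legitimate for a
locally uniformly convergent series of holomorphic functions, gives `E_α' = E_{α,α} / α`, and the
chain rule with `d/ds (λ s^α) = λ α s^(α-1)` finishes the proof.
-/

open Filter Topology

namespace Real

theorem Gamma_mul_le_Gamma_add_mul_rpow {α x : ℝ} (hα : 0 < α) (hα1 : α < 1) (hx : 0 < x) :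
    Gamma x * x ≤ Gamma (x + α) * (x + α) ^ (1 - α) := by
  have hs : 0 < x + α := by linarith
  have hΓ : 0 < Gamma (x + α) := Gamma_pos_of_pos hs
  -- log-convexity between `x + α` and `x + α + 1`, evaluated at `x + 1`
  have h := Gamma_mul_add_mul_le_rpow_Gamma_mul_rpow_Gamma hs (by linarith : 0 < x + α + 1)
    hα (by linarith : 0 < 1 - α) (by ring)
  rw [show α * (x + α) + (1 - α) * (x + α + 1) = x + 1 by ring, Gamma_add_one hx.ne',
    Gamma_add_one hs.ne', mul_rpow hs.le hΓ.le, ← mul_assoc, mul_comm (Gamma (x + α) ^ α),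
    mul_assoc, ← rpow_add hΓ, add_sub_cancel, rpow_one] at h
  linarith

theorem Gamma_div_Gamma_add_le_two_mul_rpow_neg {α x : ℝ} (hα : 0 < α) (hα1 : α < 1)
    (hx : 1 ≤ x) : Gamma x / Gamma (x + α) ≤ 2 * x ^ (-α) := by
  have hx0 : 0 < x := by linarith
  have hpow : (x + α) ^ (1 - α) ≤ 2 * x ^ (-α) * x := calc
    (x + α) ^ (1 - α) ≤ (2 * x) ^ (1 - α) := rpow_le_rpow (by linarith) (by linarith) (by linarith)
    _ = 2 ^ (1 - α) * x ^ (1 - α) := mul_rpow zero_le_two hx0.le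
    _ ≤ 2 * x ^ (1 - α) := by
      gcongr
      simpa using rpow_le_rpow_of_exponent_le one_le_two (by linarith : 1 - α ≤ 1)
    _ = 2 * x ^ (-α) * x := by rw [show 1 - α = -α + 1 by ring, rpow_add_one hx0.ne', mul_assoc]
  rw [div_le_iff₀ (Gamma_pos_of_pos (by linarith))]
  refine le_of_mul_le_mul_right ?_ hx0
  calc Gamma x * x ≤ Gamma (x + α) * (x + α) ^ (1 - α) :=
        Gamma_mul_le_Gamma_add_mul_rpow hα hα1 hx0
    _ ≤ Gamma (x + α) * (2 * x ^ (-α) * x) := by gcongr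
    _ = 2 * x ^ (-α) * Gamma (x + α) * x := by ring

theorem tendsto_Gamma_div_Gamma_add {α : ℝ} (hα : 0 < α) :
    Tendsto (fun x => Gamma x / Gamma (x + α)) atTop (𝓝 0) := by
  have hnonneg : ∀ᶠ x in atTop, 0 ≤ Gamma x / Gamma (x + α) := by
    filter_upwards [eventually_gt_atTop 0] with x hx
    exact div_nonneg (Gamma_pos_of_pos hx).le (Gamma_pos_of_pos (by linarith)).le
  rcases lt_or_ge α 1 with hα1 | hα1
  · refine squeeze_zero' hnonneg ?_ (by simpa using (tendsto_rpow_neg_atTop hα).const_mul 2)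
    filter_upwards [eventually_ge_atTop 1] with x hx
    exact Gamma_div_Gamma_add_le_two_mul_rpow_neg hα hα1 hx
  · refine squeeze_zero' hnonneg ?_ tendsto_inv_atTop_zero
    filter_upwards [eventually_ge_atTop 1] with x hx
    have hx0 : 0 < x := by linarith
    have hle : Gamma (x + 1) ≤ Gamma (x + α) :=
      Gamma_strictMonoOn_Ici.monotoneOn (by simp; linarith) (by simp; linarith) (by linarith)
    rw [Gamma_add_one hx0.ne'] at hle
    rwa [div_le_iff₀ (Gamma_pos_of_pos (by linarith)), le_inv_mul_iff₀ hx0]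

end Real

theorem norm_pow_div_Gamma {α β : ℝ} (hα : 0 ≤ α) (hβ : 0 < β) (z : ℂ) (n : ℕ) :
    ‖z ^ n / Complex.Gamma (α * n + β)‖ = ‖z‖ ^ n / Real.Gamma (α * n + β) := by
  have hpos : 0 < Real.Gamma (α * n + β) := Real.Gamma_pos_of_pos (by positivity)
  rw [norm_div, norm_pow, ← Complex.ofReal_natCast, ← Complex.ofReal_mul, ← Complex.ofReal_add,
    Complex.Gamma_ofReal, Complex.norm_real, Real.norm_of_nonneg hpos.le]

theorem summable_norm_pow_div_Gamma {α β : ℝ} (hα : 0 < α) (hβ : 0 < β) (z : ℂ) :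
    Summable fun n : ℕ => ‖z ^ n / Complex.Gamma (α * n + β)‖ := by
  have harg : Tendsto (fun n : ℕ => α * n + β) atTop atTop :=
    tendsto_atTop_add_const_right _ _ (tendsto_natCast_atTop_atTop.const_mul_atTop hα)
  have hratio : Tendsto (fun n : ℕ => ‖z‖ * (Real.Gamma (α * n + β) / Real.Gamma (α * n + β + α)))
      atTop (𝓝 0) := by
    simpa using ((Real.tendsto_Gamma_div_Gamma_add hα).comp harg).const_mul ‖z‖
  refine summable_of_ratio_norm_eventually_le one_half_lt_one ?_
  filter_upwards [hratio.eventually (ge_mem_nhds one_half_pos)] with n hn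
  have hΓ : 0 < Real.Gamma (α * n + β) := Real.Gamma_pos_of_pos (by positivity)
  rw [norm_norm, norm_norm, norm_pow_div_Gamma hα.le hβ, norm_pow_div_Gamma hα.le hβ,
    Nat.cast_succ, show α * (n + 1) + β = α * n + β + α by ring]
  calc ‖z‖ ^ (n + 1) / Real.Gamma (α * n + β + α)
      = ‖z‖ * (Real.Gamma (α * n + β) / Real.Gamma (α * n + β + α)) *
          (‖z‖ ^ n / Real.Gamma (α * n + β)) := by field_simp; ring
    _ ≤ 1 / 2 * (‖z‖ ^ n / Real.Gamma (α * n + β)) := by gcongr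

theorem hasDerivAt_pow_succ_div_Gamma {α : ℝ} (hα : 0 < α) (n : ℕ) (z : ℂ) :
    HasDerivAt (fun w : ℂ => w ^ (n + 1) / Complex.Gamma (α * (n + 1 : ℕ) + 1))
      (z ^ n / Complex.Gamma (α * n + α) / α) z := by
  have hcast : (α : ℂ) * n + α = ((α * n + α : ℝ) : ℂ) := by push_cast; ring
  have hpos : 0 < α * n + α := by positivity
  have hne : (α : ℂ) * n + α ≠ 0 := by rw [hcast]; exact_mod_cast hpos.ne'
  have hΓ : Complex.Gamma (α * n + α) ≠ 0 := by
    rw [hcast, Complex.Gamma_ofReal]; exact_mod_cast (Real.Gamma_pos_of_pos hpos).ne'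
  have hαne : (α : ℂ) ≠ 0 := by exact_mod_cast hα.ne'
  refine ((hasDerivAt_pow (n + 1) z).div_const _).congr_deriv ?_
  rw [show (α : ℂ) * (n + 1 : ℕ) + 1 = α * n + α + 1 by push_cast; ring,
    Complex.Gamma_add_one _ hne]
  field_simp
  push_cast
  ring

theorem hasDerivAt_mittagLeffler {α : ℝ} (hα : 0 < α) (z : ℂ) :
    HasDerivAt (mittagLeffler α) (mittagLeffler2 α α z / α) z := by
  set F : ℕ → ℂ → ℂ := fun n w => w ^ n / Complex.Gamma (α * n + 1)
  set R : ℝ := ‖z‖ + 1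
  have hz : z ∈ Metric.ball 0 R := mem_ball_zero_iff.mpr (lt_add_one _)
  have hdiff : ∀ n, DifferentiableOn ℂ (F n) (Metric.ball 0 R) := fun n => by fun_prop
  have hle : ∀ n, ∀ w ∈ Metric.ball 0 R, ‖F n w‖ ≤ ‖F n R‖ := by
    intro n w hw
    simp only [F, norm_div, norm_pow, Complex.norm_real, Real.norm_of_nonneg (by positivity : 0 ≤ R)]
    gcongr
    exact (mem_ball_zero_iff.mp hw).le
  have hsum := summable_norm_pow_div_Gamma hα one_pos R
  have hE : DifferentiableAt ℂ (mittagLeffler α) z :=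
    (Complex.differentiableOn_tsum_of_summable_norm hsum hdiff Metric.isOpen_ball hle)
      |>.differentiableAt (Metric.isOpen_ball.mem_nhds hz)
  have hderiv : HasSum (fun n => deriv (F n) z) (deriv (mittagLeffler α) z) :=
    Complex.hasSum_deriv_of_summable_norm hsum hdiff Metric.isOpen_ball hle hz
  rw [← hasSum_nat_add_iff' 1] at hderiv
  simp only [Finset.range_one, Finset.sum_singleton, F, pow_zero, deriv_const, sub_zero,
    fun n => (hasDerivAt_pow_succ_div_Gamma hα n z).deriv] at hderiv
  rw [mittagLeffler2, ← tsum_div_const, hderiv.tsum_eq]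
  exact hE.hasDerivAt

theorem mittagLeffler_hasDerivAt_general (α : ℝ) (hα : 0 < α) (lam : ℝ)
    (σ : ℝ) (hσ : 0 < σ) :
    HasDerivAt (fun s : ℝ => mittagLeffler α ((lam * s ^ α : ℝ) : ℂ))
      (((lam * σ ^ (α - 1) : ℝ) : ℂ) * mittagLeffler2 α α ((lam * σ ^ α : ℝ) : ℂ))
      σ := by
  have hinner : HasDerivAt (fun s : ℝ => ((lam * s ^ α : ℝ) : ℂ))
      ((lam * (α * σ ^ (α - 1)) : ℝ) : ℂ) σ :=
    ((Real.hasDerivAt_rpow_const (Or.inl hσ.ne')).const_mul lam).ofReal_comp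
  refine ((hasDerivAt_mittagLeffler hα _).comp σ hinner).congr_deriv ?_
  have hαne : (α : ℂ) ≠ 0 := by exact_mod_cast hα.ne'
  push_cast
  field_simp

theorem mittagLeffler_hasDerivAt (α : ℝ) (hα : 0 < α) (hα1 : α < 1) (lam : ℝ)
    (σ : ℝ) (hσ : 0 < σ) :
    HasDerivAt (fun s : ℝ => mittagLeffler α ((lam * s ^ α : ℝ) : ℂ))
      (((lam * σ ^ (α - 1) : ℝ) : ℂ) * mittagLeffler2 α α ((lam * σ ^ α : ℝ) : ℂ))
      σ :=
  mittagLeffler_hasDerivAt_general α hα lam σ hσ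
end

section
/- The Mittag-Leffler function of order 1/2 fails the semigroup property: there exist λ, t, s > 0 such that E_{1/2}(λ(t+s)^{1/2}) ≠ E_{1/2}(λ t^{1/2})·E_{1/2}(λ s^{1/2}). -/
open Real Nat

lemma Real.Gamma_mul_factorial_le_Gamma_add_nat {x : ℝ} (hx : 1 ≤ x) (k : ℕ) :
    Gamma x * k ! ≤ Gamma (x + k) := by
  induction k with
  | zero => simp
  | succ k ih =>
    rw [factorial_succ, cast_mul, cast_succ, ← add_assoc, Gamma_add_one (by positivity)]
    calc Gamma x * ((k + 1) * k !) = (k + 1) * (Gamma x * k !) := by ring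
      _ ≤ (x + k) * Gamma (x + k) := by
        have : 0 < Gamma x := Gamma_pos_of_pos (by linarith)
        exact mul_le_mul (by linarith) ih (by positivity) (by linarith)

lemma mittagLeffler_ofReal (α x : ℝ) :
    mittagLeffler α x = ↑(∑' n : ℕ, x ^ n / Gamma (α * n + 1)) := by
  rw [mittagLeffler, Complex.ofReal_tsum]
  push_cast [← Complex.Gamma_ofReal]
  rfl

noncomputable def mittagLefflerHalfOdd (x : ℝ) : ℝ :=
  ∑' k : ℕ, x ^ (2 * k + 1) / Gamma (k + 3 / 2)

lemma Real.Gamma_three_div_two : Gamma (3 / 2) = √π / 2 := by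
  rw [show (3 : ℝ) / 2 = 1 / 2 + 1 by norm_num, Gamma_add_one (by norm_num), Gamma_one_half_eq]
  ring

lemma abs_pow_odd_div_Gamma_le (x : ℝ) (k : ℕ) :
    |x| ^ (2 * k + 1) / Gamma (k + 3 / 2) ≤ 2 / √π * |x| * ((x ^ 2) ^ k / k !) := by
  have hΓ := Gamma_mul_factorial_le_Gamma_add_nat (x := 3 / 2) (by norm_num) k
  rw [Gamma_three_div_two, add_comm] at hΓ
  calc |x| ^ (2 * k + 1) / Gamma (k + 3 / 2) ≤ |x| ^ (2 * k + 1) / (√π / 2 * k !) := by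
        gcongr
    _ = 2 / √π * |x| * ((x ^ 2) ^ k / k !) := by
        rw [pow_succ, pow_mul, sq_abs]
        field_simp

lemma hasSum_mittagLefflerHalfOdd (x : ℝ) :
    HasSum (fun k : ℕ ↦ x ^ (2 * k + 1) / Gamma (k + 3 / 2)) (mittagLefflerHalfOdd x) := by
  refine (Summable.of_norm_bounded
    ((summable_pow_div_factorial (x ^ 2)).mul_left (2 / √π * |x|)) fun k ↦ ?_).hasSum
  rw [norm_div, norm_pow, Real.norm_eq_abs,
    Real.norm_of_nonneg (Gamma_pos_of_pos (by positivity)).le]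
  exact abs_pow_odd_div_Gamma_le x k

lemma hasSum_mittagLeffler_half (x : ℝ) :
    HasSum (fun n : ℕ ↦ x ^ n / Gamma (1 / 2 * n + 1))
      (exp (x ^ 2) + mittagLefflerHalfOdd x) := by
  refine HasSum.even_add_odd ?_ ?_
  · have heven (k : ℕ) : x ^ (2 * k) / Gamma (1 / 2 * ↑(2 * k) + 1) = (x ^ 2) ^ k / k ! := by
      rw [pow_mul, cast_mul, cast_two, ← mul_assoc, one_div_mul_cancel two_ne_zero, one_mul,
        Gamma_nat_eq_factorial]
    simp_rw [heven, exp_eq_exp_ℝ]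
    exact NormedSpace.expSeries_div_hasSum_exp (x ^ 2)
  · convert hasSum_mittagLefflerHalfOdd x using 3 with k
    push_cast
    ring_nf

lemma mittagLeffler_half_ofReal (x : ℝ) :
    mittagLeffler (1 / 2) x = ↑(exp (x ^ 2) + mittagLefflerHalfOdd x) := by
  rw [mittagLeffler_ofReal, (hasSum_mittagLeffler_half x).tsum_eq]

lemma mul_le_mittagLefflerHalfOdd {x : ℝ} (hx : 0 ≤ x) :
    2 / √π * x ≤ mittagLefflerHalfOdd x := by
  calc 2 / √π * x = x ^ (2 * 0 + 1) / Gamma ((0 : ℕ) + 3 / 2) := by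
        rw [cast_zero, zero_add, Gamma_three_div_two]
        ring
    _ ≤ mittagLefflerHalfOdd x :=
        (hasSum_mittagLefflerHalfOdd x).summable.le_tsum 0 fun k _ ↦
          div_nonneg (pow_nonneg hx _) (Gamma_pos_of_pos (by positivity)).le

lemma mittagLefflerHalfOdd_le {x : ℝ} (hx : 0 ≤ x) :
    mittagLefflerHalfOdd x ≤ 2 / √π * x * exp (x ^ 2) := by
  have hexp := (NormedSpace.expSeries_div_hasSum_exp (x ^ 2)).mul_left (2 / √π * x)
  rw [← congrFun exp_eq_exp_ℝ] at hexp
  refine hasSum_le (fun k ↦ ?_) (hasSum_mittagLefflerHalfOdd x) hexp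
  simpa [abs_of_nonneg hx] using abs_pow_odd_div_Gamma_le x k

lemma exp_add_mittagLefflerHalfOdd_lt_mul {a b r : ℝ} (ha : 0 ≤ a) (hb : 0 ≤ b) (hr : 0 ≤ r)
    (hrab : r ^ 2 = a ^ 2 + b ^ 2) (h : r * exp (r ^ 2) < a + b) :
    exp (r ^ 2) + mittagLefflerHalfOdd r <
      (exp (a ^ 2) + mittagLefflerHalfOdd a) * (exp (b ^ 2) + mittagLefflerHalfOdd b) := by
  have hc : 0 < 2 / √π := by positivity
  have hoa := mul_le_mittagLefflerHalfOdd ha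
  have hob := mul_le_mittagLefflerHalfOdd hb
  have hoa₀ := (mul_nonneg hc.le ha).trans hoa
  have hob₀ := (mul_nonneg hc.le hb).trans hob
  have hea := one_le_exp (sq_nonneg a)
  have heb := one_le_exp (sq_nonneg b)
  calc exp (r ^ 2) + mittagLefflerHalfOdd r ≤ exp (r ^ 2) + 2 / √π * (r * exp (r ^ 2)) := by
        grw [mittagLefflerHalfOdd_le hr, mul_assoc]
    _ < exp (r ^ 2) + 2 / √π * (a + b) := by gcongr
    _ = exp (a ^ 2) * exp (b ^ 2) + 2 / √π * a + 2 / √π * b := by rw [hrab, exp_add]; ring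
    _ ≤ (exp (a ^ 2) + mittagLefflerHalfOdd a) * (exp (b ^ 2) + mittagLefflerHalfOdd b) := by
        nlinarith [mul_le_mul_of_nonneg_left heb hoa₀, mul_le_mul_of_nonneg_left hea hob₀,
          mul_nonneg hoa₀ hob₀]

theorem mittagLeffler_half_not_semigroup :
    ∃ lam t s : ℝ, 0 < lam ∧ 0 < t ∧ 0 < s ∧
      mittagLeffler (1/2) ((lam * (t + s) ^ ((1 : ℝ)/2) : ℝ) : ℂ) ≠
        mittagLeffler (1/2) ((lam * t ^ ((1 : ℝ)/2) : ℝ) : ℂ) *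
          mittagLeffler (1/2) ((lam * s ^ ((1 : ℝ)/2) : ℝ) : ℂ) := by
  refine ⟨1 / 4, 1, 1, by norm_num, one_pos, one_pos, ?_⟩
  rw [one_add_one_eq_two, ← sqrt_eq_rpow, one_rpow, mul_one, mittagLeffler_half_ofReal,
    mittagLeffler_half_ofReal, ← Complex.ofReal_mul, Ne, Complex.ofReal_inj]
  have hsq : (1 / 4 * √2) ^ 2 = 1 / 8 := by
    rw [mul_pow, sq_sqrt zero_le_two]; norm_num
  have hexp : exp (1 / 8) < 8 / 7 := by
    convert exp_bound_div_one_sub_of_interval' (x := 1 / 8) (by norm_num) (by norm_num) using 1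
    norm_num
  have hsqrt : √2 < 7 / 4 := by
    rw [sqrt_lt' (by norm_num)]; norm_num
  refine (exp_add_mittagLefflerHalfOdd_lt_mul (by norm_num) (by norm_num) (by positivity)
    (by rw [hsq]; norm_num) ?_).ne
  rw [hsq]
  nlinarith [exp_pos (1 / 8 : ℝ), sqrt_nonneg 2]
end
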